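/- Let B_0, …, B_{m−1} be simple N×N real (0,1)-matrices defining a deterministic finite automaton, and for k ∈ ℕ let P_k = m^{−k}·#{ words (ℓ₁,…,ℓ_k) ∈ {0,…,m−1}^k that are not reset words }. Let W = { w ∈ ℝᴺ : ∑_{i=1}^N w_i = 0 } and A_i = B_i|_W. Then: (1) the limit p = lim_{k→∞} P_k^{1/k} exists and equals ρ₂(A_0, …, A_{m−1})², the square of the L_2-spectral radius of the restrictions to W; and (2) the automaton admits a reset word if and only if p < 1. -/

import Mathlib

open MeasureTheory Metric Filter Set Pointwise

/-- A matrix is simple if every column contains exactly one entry `1` and all other entries `0`. -/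
def IsSimple {I : Type*} (T : Matrix I I ℝ) : Prop :=
  ∀ b, ∃ a, T a b = 1 ∧ ∀ a', a' ≠ a → T a' b = 0

/-- The matrix `T` has a row all of whose entries equal `1` (a reset-word product). -/
def hasOnesRow {I : Type*} (T : Matrix I I ℝ) : Prop := ∃ a, ∀ b, T a b = 1

/-- The subspace `W = { w : ∑ i, w i = 0 }`. -/
noncomputable def Wsub (I : Type*) [Fintype I] : Submodule ℝ (I → ℝ) :=
  LinearMap.ker ((∑ i : I, LinearMap.proj i) : (I → ℝ) →ₗ[ℝ] ℝ)

/-- The operator norm of the restriction of `T` to the subspace `U` (for `U` invariant under `T`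
this is the norm of `T|_U`). -/
noncomputable def opNormOn {I : Type*} [Fintype I] (U : Submodule ℝ (I → ℝ))
    (T : Matrix I I ℝ) : ℝ :=
  sSup {c : ℝ | ∃ u ∈ U, ‖u‖ ≤ 1 ∧ c = ‖T.mulVec u‖}

/-- The `L_p`-spectral radius of the family `A` of matrices restricted to the subspace `U`:
`ρ_p = lim_k ( m^{-k} ∑_{words w of length k} ‖(A_{w₁}⋯A_{w_k})|_U‖^p )^{1/(pk)}`. -/
noncomputable def lpRadiusOn {I ι : Type*} [Fintype I] [DecidableEq I] [Fintype ι]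
    (U : Submodule ℝ (I → ℝ)) (A : ι → Matrix I I ℝ) (p : ℝ) : ℝ :=
  limUnder Filter.atTop fun k : ℕ =>
    (((Fintype.card ι : ℝ) ^ k)⁻¹ *
      ∑ w : Fin k → ι, opNormOn U ((List.ofFn fun i => A (w i)).prod) ^ p) ^ (1 / (p * k))

/-!
For a simple matrix `T`, the restriction `T|_W` vanishes when `T` has a row of ones (it collapses
all coordinates into that row), and otherwise has norm between `1` and `N`: if columns `b, b'`
have their `1` in different rows, `T (e_b - e_b')` has an entry `1`. Hence
`m^{-k} ∑_{|w| = k} ‖A_w‖²` lies between `P_k` and `N² P_k`, so both have the same exponential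
growth rate. A word containing a reset word as prefix or suffix is a reset word, so
`P_{k+l} ≤ P_k P_l`, and Fekete's lemma gives `lim P_k^{1/k} = inf_k P_k^{1/k}`, which is `< 1`
exactly when some `P_k < 1`, i.e. when a reset word exists.
-/

open Topology
open scoped Matrix

theorem exists_tendsto_rpow_inv_of_submultiplicative {a : ℕ → ℝ} {r : ℝ} (hr : 0 < r)
    (ha : ∀ n, a n = 0 ∨ r ^ n ≤ a n) (hmul : ∀ m n, a (m + n) ≤ a m * a n) :
    ∃ L, Tendsto (fun n : ℕ => a n ^ (1 / n : ℝ)) atTop (𝓝 L) ∧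
      ∀ n ≠ 0, L ≤ a n ^ (1 / n : ℝ) := by
  have hnonneg : ∀ n, 0 ≤ a n := fun n =>
    (ha n).elim (fun h => h.ge) fun h => (pow_pos hr n).le.trans h
  by_cases hzero : ∃ K, a K = 0
  · obtain ⟨K, hK⟩ := hzero
    refine ⟨0, tendsto_const_nhds.congr' ?_, fun n _ => Real.rpow_nonneg (hnonneg n) _⟩
    filter_upwards [eventually_ge_atTop (K + 1)] with n hn
    obtain ⟨j, rfl⟩ := Nat.exists_eq_add_of_le (Nat.le_of_succ_le hn)
    have hKj : a (K + j) = 0 := le_antisymm (by simpa [hK] using hmul K j) (hnonneg _)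
    rw [hKj, Real.zero_rpow (one_div_ne_zero (Nat.cast_pos.2 (by omega)).ne')]
  push Not at hzero
  have hpos : ∀ n, 0 < a n := fun n => (hnonneg n).lt_of_ne' (hzero n)
  -- Fekete's lemma for `log a`; the bound `r ^ n ≤ a n` keeps `log a n / n` bounded below.
  have hsub : Subadditive fun n => Real.log (a n) := fun m n => by
    rw [← Real.log_mul (hpos m).ne' (hpos n).ne']
    exact Real.log_le_log (hpos _) (hmul m n)
  have hbdd : BddBelow (Set.range fun n : ℕ => Real.log (a n) / n) := by
    refine ⟨min (Real.log r) 0, ?_⟩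
    rintro _ ⟨n, rfl⟩
    rcases Nat.eq_zero_or_pos n with rfl | hn
    · simp
    have hlog : n * Real.log r ≤ Real.log (a n) := by
      rw [← Real.log_pow]
      exact Real.log_le_log (by positivity) ((ha n).resolve_left (hzero n))
    exact (min_le_left _ _).trans ((le_div_iff₀ (by positivity)).2 (by linarith))
  have hroot : ∀ n : ℕ, a n ^ (1 / n : ℝ) = Real.exp (Real.log (a n) / n) := fun n => by
    rw [Real.rpow_def_of_pos (hpos n), mul_one_div]
  refine ⟨Real.exp hsub.lim, ?_, fun n hn => ?_⟩
  · simp only [hroot]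
    exact (Real.continuous_exp.tendsto _).comp (hsub.tendsto_lim hbdd)
  · rw [hroot]
    exact Real.exp_le_exp.2 (hsub.lim_le_div hbdd hn)

theorem tendsto_rpow_inv_of_le_of_le_const_mul {a s : ℕ → ℝ} {C L : ℝ} (hC : 0 < C)
    (ha : ∀ n, 0 ≤ a n) (has : ∀ n, a n ≤ s n) (hsa : ∀ n, s n ≤ C * a n)
    (h : Tendsto (fun n : ℕ => a n ^ (1 / n : ℝ)) atTop (𝓝 L)) :
    Tendsto (fun n : ℕ => s n ^ (1 / n : ℝ)) atTop (𝓝 L) := by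
  have hC_root : Tendsto (fun n : ℕ => C ^ (1 / n : ℝ)) atTop (𝓝 1) := by
    simpa using tendsto_const_nhds.rpow (tendsto_const_div_atTop_nhds_zero_nat 1)
      (Or.inl hC.ne')
  refine tendsto_of_tendsto_of_tendsto_of_le_of_le h (one_mul L ▸ hC_root.mul h)
    (fun n => Real.rpow_le_rpow (ha n) (has n) (by positivity)) fun n => ?_
  calc s n ^ (1 / n : ℝ) ≤ (C * a n) ^ (1 / n : ℝ) :=
        Real.rpow_le_rpow ((ha n).trans (has n)) (hsa n) (by positivity)
    _ = C ^ (1 / n : ℝ) * a n ^ (1 / n : ℝ) := Real.mul_rpow hC.le (ha n)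

section SimpleMatrix

variable {I : Type*} {S T : Matrix I I ℝ}

theorem isSimple_one [DecidableEq I] : IsSimple (1 : Matrix I I ℝ) := fun b =>
  ⟨b, Matrix.one_apply_eq b, fun _ h => Matrix.one_apply_ne h⟩

theorem IsSimple.mul [Fintype I] (hS : IsSimple S) (hT : IsSimple T) : IsSimple (S * T) := by
  intro b
  obtain ⟨c, hc, hc0⟩ := hT b
  obtain ⟨a, ha, ha0⟩ := hS c
  have hcol : ∀ a', (S * T) a' b = S a' c := fun a' => by
    rw [Matrix.mul_apply, Finset.sum_eq_single c (fun c' _ h => by rw [hc0 c' h, mul_zero])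
      (by simp), hc, mul_one]
  exact ⟨a, by rw [hcol, ha], fun a' h => by rw [hcol, ha0 a' h]⟩

theorem IsSimple.list_prod [Fintype I] [DecidableEq I] {l : List (Matrix I I ℝ)}
    (hl : ∀ T ∈ l, IsSimple T) : IsSimple l.prod := by
  induction l with
  | nil => exact isSimple_one
  | cons T l ih =>
    rw [List.prod_cons]
    exact (hl T List.mem_cons_self).mul (ih fun T' h => hl T' (List.mem_cons_of_mem _ h))

theorem IsSimple.sum_apply [Fintype I] (hT : IsSimple T) (b : I) : ∑ a, T a b = 1 := by
  obtain ⟨a, ha, ha0⟩ := hT b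
  rw [Finset.sum_eq_single a (fun a' _ h => ha0 a' h) (by simp), ha]

theorem IsSimple.abs_apply_le (hT : IsSimple T) (a b : I) : |T a b| ≤ 1 := by
  obtain ⟨c, hc, hc0⟩ := hT b
  rcases eq_or_ne a c with rfl | h
  · simp [hc]
  · simp [hc0 a h]

theorem IsSimple.apply_eq_zero_of_ne_onesRow (hT : IsSimple T) {a : I} (ha : ∀ b, T a b = 1)
    {a' : I} (h : a' ≠ a) (b : I) : T a' b = 0 := by
  obtain ⟨c, _, hc0⟩ := hT b
  have hac : a = c := by_contra fun hac => one_ne_zero ((ha b).symm.trans (hc0 a hac))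
  exact hc0 a' (hac ▸ h)

theorem hasOnesRow.mul [Fintype I] (hS : hasOnesRow S) (hT : IsSimple T) : hasOnesRow (S * T) := by
  obtain ⟨a, ha⟩ := hS
  exact ⟨a, fun b => by simp only [Matrix.mul_apply, ha, one_mul, hT.sum_apply]⟩

theorem IsSimple.mul_hasOnesRow [Fintype I] (hS : IsSimple S) (hT : IsSimple T) (h : hasOnesRow T) :
    hasOnesRow (S * T) := by
  obtain ⟨a, ha⟩ := h
  obtain ⟨r, hr, -⟩ := hS a
  refine ⟨r, fun b => ?_⟩
  rw [Matrix.mul_apply, Finset.sum_eq_single a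
    (fun c _ h => by rw [hT.apply_eq_zero_of_ne_onesRow ha h, mul_zero]) (by simp), ha, mul_one, hr]

theorem IsSimple.exists_apply_eq_one_apply_eq_zero [Nonempty I] (hT : IsSimple T)
    (h : ¬ hasOnesRow T) : ∃ a b b', T a b = 1 ∧ T a b' = 0 := by
  obtain ⟨a, ha, -⟩ := hT (Classical.arbitrary I)
  obtain ⟨b', hb'⟩ := not_forall.mp (not_exists.mp h a)
  obtain ⟨c, hc, hc0⟩ := hT b'
  exact ⟨a, _, b', ha, hc0 a fun hac => hb' (hac ▸ hc)⟩

end SimpleMatrix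

section OpNorm

variable {I : Type*} [Fintype I] {T : Matrix I I ℝ}

theorem mem_Wsub {u : I → ℝ} : u ∈ Wsub I ↔ ∑ i, u i = 0 := by
  simp [Wsub, LinearMap.mem_ker]

theorem IsSimple.norm_mulVec_le (hT : IsSimple T) (u : I → ℝ) :
    ‖T *ᵥ u‖ ≤ Fintype.card I * ‖u‖ := by
  refine (pi_norm_le_iff_of_nonneg (by positivity)).2 fun a => ?_
  calc ‖∑ b, T a b * u b‖ ≤ ∑ b, ‖T a b * u b‖ := norm_sum_le _ _
    _ ≤ ∑ _b : I, ‖u‖ := Finset.sum_le_sum fun b _ => by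
        rw [norm_mul, Real.norm_eq_abs]
        exact mul_le_of_le_one_left (norm_nonneg _) (hT.abs_apply_le a b) |>.trans
          (norm_le_pi_norm u b)
    _ = Fintype.card I * ‖u‖ := by simp

theorem IsSimple.norm_mulVec_le_card (hT : IsSimple T) {u : I → ℝ} (hu : ‖u‖ ≤ 1) :
    ‖T *ᵥ u‖ ≤ Fintype.card I :=
  (hT.norm_mulVec_le u).trans (mul_le_of_le_one_right (by positivity) hu)

theorem IsSimple.le_opNormOn (hT : IsSimple T) {U : Submodule ℝ (I → ℝ)} {u : I → ℝ}
    (hu : u ∈ U) (hu1 : ‖u‖ ≤ 1) : ‖T *ᵥ u‖ ≤ opNormOn U T :=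
  le_csSup ⟨Fintype.card I, by rintro _ ⟨v, -, hv, rfl⟩; exact hT.norm_mulVec_le_card hv⟩
    ⟨u, hu, hu1, rfl⟩

theorem IsSimple.opNormOn_nonneg (hT : IsSimple T) (U : Submodule ℝ (I → ℝ)) :
    0 ≤ opNormOn U T := by
  simpa using hT.le_opNormOn U.zero_mem (by simp)

theorem IsSimple.opNormOn_le_card (hT : IsSimple T) (U : Submodule ℝ (I → ℝ)) :
    opNormOn U T ≤ Fintype.card I := by
  refine csSup_le ⟨0, 0, U.zero_mem, by simp, by simp⟩ ?_
  rintro _ ⟨v, -, hv, rfl⟩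
  exact hT.norm_mulVec_le_card hv

theorem IsSimple.opNormOn_Wsub_eq_zero (hT : IsSimple T) (h : hasOnesRow T) :
    opNormOn (Wsub I) T = 0 := by
  obtain ⟨a, ha⟩ := h
  have hker : ∀ u ∈ Wsub I, T *ᵥ u = 0 := fun u hu => by
    funext a'
    rcases eq_or_ne a' a with rfl | hne
    · simpa [Matrix.mulVec, dotProduct, ha] using mem_Wsub.1 hu
    · simp [Matrix.mulVec, dotProduct, hT.apply_eq_zero_of_ne_onesRow ha hne]
  refine le_antisymm (csSup_le ⟨0, 0, zero_mem _, by simp, by simp⟩ ?_) (hT.opNormOn_nonneg _)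
  rintro _ ⟨u, hu, -, rfl⟩
  simp [hker u hu]

theorem IsSimple.one_le_opNormOn_Wsub [DecidableEq I] [Nonempty I] (hT : IsSimple T)
    (h : ¬ hasOnesRow T) : 1 ≤ opNormOn (Wsub I) T := by
  obtain ⟨a, b, b', hb, hb'⟩ := hT.exists_apply_eq_one_apply_eq_zero h
  set u : I → ℝ := Pi.single b 1 - Pi.single b' 1
  have hu : u ∈ Wsub I := mem_Wsub.2 (by simp [u, Finset.sum_sub_distrib])
  have hu1 : ‖u‖ ≤ 1 := by
    refine (pi_norm_le_iff_of_nonneg zero_le_one).2 fun i => ?_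
    simp only [u, Pi.sub_apply, Pi.single_apply, Real.norm_eq_abs]
    split_ifs <;> norm_num
  have hTu : (T *ᵥ u) a = 1 := by
    simp [u, Matrix.mulVec_sub, Matrix.mulVec_single, hb, hb']
  calc (1 : ℝ) = ‖(T *ᵥ u) a‖ := by simp [hTu]
    _ ≤ ‖T *ᵥ u‖ := norm_le_pi_norm _ a
    _ ≤ opNormOn (Wsub I) T := hT.le_opNormOn hu hu1

end OpNorm

section Words

variable {I ι : Type*} [Fintype I] [DecidableEq I] (A : ι → Matrix I I ℝ)

def wordProd {k : ℕ} (w : Fin k → ι) : Matrix I I ℝ :=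
  (List.ofFn fun i => A (w i)).prod

theorem wordProd_append {k l : ℕ} (u : Fin k → ι) (v : Fin l → ι) :
    wordProd A (Fin.append u v) = wordProd A u * wordProd A v := by
  simp [wordProd, List.ofFn_add, Fin.append_right]

variable {A}

theorem isSimple_wordProd (hA : ∀ i, IsSimple (A i)) {k : ℕ} (w : Fin k → ι) :
    IsSimple (wordProd A w) :=
  IsSimple.list_prod fun T hT => by
    obtain ⟨i, rfl⟩ := List.mem_ofFn.1 hT
    exact hA _

variable (A)

def nonResetWords (k : ℕ) : Set (Fin k → ι) :=
  {w | ¬ hasOnesRow (wordProd A w)}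

variable [Fintype ι]

noncomputable def nonResetFreq (k : ℕ) : ℝ :=
  (nonResetWords A k).ncard / (Fintype.card ι : ℝ) ^ k

/-- The normalised sum `m^{-k} ∑_{|w| = k} ‖A_w|_U‖^p` under the root in `lpRadiusOn`. -/
noncomputable def normPowMean (U : Submodule ℝ (I → ℝ)) (p : ℝ) (k : ℕ) : ℝ :=
  ((Fintype.card ι : ℝ) ^ k)⁻¹ * ∑ w : Fin k → ι, opNormOn U (wordProd A w) ^ p

variable {A}

theorem ncard_nonResetWords_add_le (hA : ∀ i, IsSimple (A i)) (k l : ℕ) :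
    (nonResetWords A (k + l)).ncard ≤ (nonResetWords A k).ncard * (nonResetWords A l).ncard := by
  rw [← Set.ncard_prod]
  refine (Set.ncard_le_ncard ?_ (Set.toFinite _)).trans
    (Set.ncard_image_le (f := fun p => Fin.append p.1 p.2))
  intro w hw
  have hsplit : Fin.append (w ∘ Fin.castAdd l) (w ∘ Fin.natAdd k) = w :=
    Fin.append_castAdd_natAdd
  refine ⟨(w ∘ Fin.castAdd l, w ∘ Fin.natAdd k), ⟨fun h => hw ?_, fun h => hw ?_⟩, hsplit⟩
  · rw [← hsplit, wordProd_append]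
    exact h.mul (isSimple_wordProd hA _)
  · rw [← hsplit, wordProd_append]
    exact (isSimple_wordProd hA _).mul_hasOnesRow (isSimple_wordProd hA _) h

theorem nonResetFreq_nonneg (k : ℕ) : 0 ≤ nonResetFreq A k := by
  unfold nonResetFreq
  positivity

theorem nonResetFreq_add_le (hA : ∀ i, IsSimple (A i)) (k l : ℕ) :
    nonResetFreq A (k + l) ≤ nonResetFreq A k * nonResetFreq A l := by
  rw [nonResetFreq, nonResetFreq, nonResetFreq, div_mul_div_comm, ← pow_add]
  gcongr
  exact_mod_cast ncard_nonResetWords_add_le hA k l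

theorem nonResetFreq_eq_zero_or_inv_pow_le (k : ℕ) :
    nonResetFreq A k = 0 ∨ (Fintype.card ι : ℝ)⁻¹ ^ k ≤ nonResetFreq A k := by
  rcases Nat.eq_zero_or_pos (nonResetWords A k).ncard with h | h
  · left
    simp [nonResetFreq, h]
  · right
    rw [inv_pow, nonResetFreq, inv_eq_one_div]
    gcongr
    exact_mod_cast h

theorem ncard_nonResetWords_le (k : ℕ) : (nonResetWords A k).ncard ≤ Fintype.card ι ^ k := by
  simpa using Set.ncard_le_card (nonResetWords A k)

theorem nonResetFreq_le_one (k : ℕ) : nonResetFreq A k ≤ 1 :=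
  div_le_one_of_le₀ (by exact_mod_cast ncard_nonResetWords_le k) (by positivity)

theorem nonResetFreq_lt_one_iff [Nonempty ι] (k : ℕ) :
    nonResetFreq A k < 1 ↔ ∃ w : Fin k → ι, hasOnesRow (wordProd A w) := by
  rw [nonResetFreq, div_lt_one (by positivity)]
  norm_cast
  constructor
  · intro h
    by_contra! hall
    refine h.ne ?_
    rw [show nonResetWords A k = Set.univ from Set.eq_univ_of_forall hall]
    simp
  · rintro ⟨w, hw⟩
    simpa using Set.ncard_lt_card (Set.ne_univ_iff_exists_notMem _ |>.2 ⟨w, not_not.2 hw⟩)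

end Words

section NormPowMean

variable {I ι : Type*} [Fintype I] [DecidableEq I] [Fintype ι] {A : ι → Matrix I I ℝ}

theorem sq_lpRadiusOn_two_of_tendsto {U : Submodule ℝ (I → ℝ)} {L : ℝ}
    (h : Tendsto (fun k : ℕ => normPowMean A U 2 k ^ (1 / k : ℝ)) atTop (𝓝 L)) :
    lpRadiusOn U A 2 ^ 2 = L := by
  have hmean : ∀ k, 0 ≤ normPowMean A U 2 k := fun k => by
    unfold normPowMean
    simp only [Real.rpow_two]
    positivity
  have hL : 0 ≤ L := ge_of_tendsto' h fun k => Real.rpow_nonneg (hmean k) _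
  have hsqrt : Tendsto (fun k : ℕ => normPowMean A U 2 k ^ (1 / (2 * k : ℝ))) atTop (𝓝 √L) := by
    refine ((Real.continuous_sqrt.tendsto L).comp h).congr fun k => ?_
    rw [Function.comp_apply, Real.sqrt_eq_rpow, ← Real.rpow_mul (hmean k)]
    ring_nf
  rw [show lpRadiusOn U A 2 = √L from hsqrt.limUnder_eq, Real.sq_sqrt hL]

theorem nonResetFreq_le_normPowMean_two [Nonempty I] (hA : ∀ i, IsSimple (A i)) (k : ℕ) :
    nonResetFreq A k ≤ normPowMean A (Wsub I) 2 k := by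
  classical
  rw [nonResetFreq, normPowMean, div_eq_inv_mul]
  gcongr
  rw [nonResetWords, Set.ncard_eq_toFinset_card', Set.toFinset_ofPred]
  calc ((Finset.univ.filter fun w => ¬ hasOnesRow (wordProd A w)).card : ℝ)
      ≤ ∑ w ∈ Finset.univ.filter fun w => ¬ hasOnesRow (wordProd A w),
          opNormOn (Wsub I) (wordProd A w) ^ (2 : ℝ) := by
        simpa using Finset.card_nsmul_le_sum _ _ (1 : ℝ) fun w hw =>
          Real.one_le_rpow ((isSimple_wordProd hA w).one_le_opNormOn_Wsub
            (Finset.mem_filter.1 hw).2) zero_le_two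
    _ ≤ ∑ w, opNormOn (Wsub I) (wordProd A w) ^ (2 : ℝ) :=
        Finset.sum_le_sum_of_subset_of_nonneg (Finset.filter_subset _ _) fun w _ _ =>
          Real.rpow_nonneg ((isSimple_wordProd hA w).opNormOn_nonneg _) _

theorem normPowMean_two_le (hA : ∀ i, IsSimple (A i)) (k : ℕ) :
    normPowMean A (Wsub I) 2 k ≤ (Fintype.card I : ℝ) ^ 2 * nonResetFreq A k := by
  classical
  rw [nonResetFreq, normPowMean, div_eq_inv_mul, mul_left_comm]
  gcongr
  rw [nonResetWords, Set.ncard_eq_toFinset_card', Set.toFinset_ofPred]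
  calc ∑ w, opNormOn (Wsub I) (wordProd A w) ^ (2 : ℝ)
      = ∑ w ∈ Finset.univ.filter fun w => ¬ hasOnesRow (wordProd A w),
          opNormOn (Wsub I) (wordProd A w) ^ (2 : ℝ) := by
        refine (Finset.sum_filter_of_ne fun w _ hw => ?_).symm
        exact fun hreset => hw (by
          rw [(isSimple_wordProd hA w).opNormOn_Wsub_eq_zero hreset, Real.zero_rpow two_ne_zero])
    _ ≤ _ := by
        simpa [mul_comm] using Finset.sum_le_card_nsmul
          (Finset.univ.filter fun w => ¬ hasOnesRow (wordProd A w)) _ ((Fintype.card I : ℝ) ^ 2)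
          fun w _ => pow_le_pow_left₀ ((isSimple_wordProd hA w).opNormOn_nonneg _)
            ((isSimple_wordProd hA w).opNormOn_le_card _) 2

end NormPowMean

/-- For a deterministic finite automaton given by simple matrices `B_i`, the probability `P_k`
that a random word of length `k` is not a reset word satisfies `P_k^{1/k} → ρ₂(B|_W)²`, and a
reset word exists iff this limit is `< 1`. -/
theorem automaton_sync_parameter {N m : ℕ} (hN : 0 < N) (hm : 0 < m)
    (B : Fin m → Matrix (Fin N) (Fin N) ℝ) (hB : ∀ i, IsSimple (B i)) :
    Filter.Tendsto (fun k : ℕ =>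
        ((Set.ncard {w : Fin k → Fin m |
            ¬ hasOnesRow ((List.ofFn fun i => B (w i)).prod)} : ℝ) / (m : ℝ) ^ k)
          ^ ((1 : ℝ) / k))
      Filter.atTop (nhds ((lpRadiusOn (Wsub (Fin N)) B 2) ^ 2)) ∧
    ((∃ k : ℕ, ∃ w : Fin k → Fin m, hasOnesRow ((List.ofFn fun i => B (w i)).prod)) ↔
      (lpRadiusOn (Wsub (Fin N)) B 2) ^ 2 < 1) := by
  have : Nonempty (Fin N) := ⟨⟨0, hN⟩⟩
  have : Nonempty (Fin m) := ⟨⟨0, hm⟩⟩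
  have hfreq : ∀ k, (Set.ncard {w : Fin k → Fin m |
      ¬ hasOnesRow ((List.ofFn fun i => B (w i)).prod)} : ℝ) / (m : ℝ) ^ k = nonResetFreq B k :=
    fun k => by rw [nonResetFreq, Fintype.card_fin]; rfl
  simp only [hfreq]
  obtain ⟨L, hL, hL_le⟩ := exists_tendsto_rpow_inv_of_submultiplicative
    (inv_pos.2 (Nat.cast_pos.2 Fintype.card_pos)) nonResetFreq_eq_zero_or_inv_pow_le
    (nonResetFreq_add_le hB)
  rw [sq_lpRadiusOn_two_of_tendsto (tendsto_rpow_inv_of_le_of_le_const_mul (by positivity)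
    nonResetFreq_nonneg (nonResetFreq_le_normPowMean_two hB) (normPowMean_two_le hB) hL)]
  refine ⟨hL, fun ⟨k, w, hw⟩ => ?_, fun hL1 => ?_⟩
  · have hk : nonResetFreq B (k + 1) < 1 :=
      (nonResetFreq_add_le hB k 1).trans_lt (mul_lt_one_of_nonneg_of_lt_one_left
        (nonResetFreq_nonneg k) ((nonResetFreq_lt_one_iff k).2 ⟨w, hw⟩) (nonResetFreq_le_one 1))
    exact (hL_le (k + 1) k.succ_ne_zero).trans_lt
      (Real.rpow_lt_one (nonResetFreq_nonneg _) hk (by positivity))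
  · by_contra hno
    have hone : ∀ k, nonResetFreq B k = 1 := fun k =>
      (nonResetFreq_le_one k).antisymm (not_lt.1 fun h => hno ⟨k, (nonResetFreq_lt_one_iff k).1 h⟩)
    exact hL1.ne (tendsto_nhds_unique hL (by simp [hone]))
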